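/- arXiv:2212.04814 — 2 statements merged into one kernel-verified Lean document; each statement's English description precedes it below -/
import Mathlib

section
/- The 2sls weights with instruments-as-controls equal the 2sls weights with single instruments: for each ℓ, w*_ℓ := (xᵀP_Z x)⁻¹ π̂_ℓ (z_ℓᵀx) arising from the decomposition β̂_2sls = Σ_ℓ w*_ℓ β̂*_ℓ with β̂*_ℓ = (z_ℓᵀy)/(z_ℓᵀx) coincides with the weight w_ℓ from the decomposition β̂_2sls = Σ_ℓ w_ℓ β̂_ℓ with β̂_ℓ = ψ̂_ℓ/π̂_ℓ; equivalently, both decompositions hold with the same coefficients: β̂_2sls = Σ_ℓ π̂_ℓ (z_ℓᵀx)(xᵀP_Z x)⁻¹ · β̂_ℓ = Σ_ℓ π̂_ℓ (z_ℓᵀx)(xᵀP_Z x)⁻¹ · β̂*_ℓ. -/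
open Matrix

/-!
Write `S = xᵀP_Z x`, `π̂ = (ZᵀZ)⁻¹Zᵀx`, `ψ̂ = (ZᵀZ)⁻¹Zᵀy`. Since `(ZᵀZ)⁻¹` is symmetric, the bilinear
form `xᵀP_Z y` can be read in two ways, `(Zᵀx) ⬝ ψ̂ = π̂ ⬝ (Zᵀy)`. Multiplying the `ℓ`-th
summand of the first by `π̂_ℓ / π̂_ℓ`, and of the second by `(z_ℓᵀx) / (z_ℓᵀx)`, exhibits
`β̂_2sls = S⁻¹ xᵀP_Z y` as the average of `ψ̂_ℓ / π̂_ℓ`, respectively of `(z_ℓᵀy) / (z_ℓᵀx)`,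
with the same weights `π̂_ℓ (z_ℓᵀx) S⁻¹`.
-/

namespace Matrix

variable {m k R : Type*} [Fintype m] [Fintype k] [CommSemiring R]

theorem dotProduct_mul_mul_transpose_mulVec (Z : Matrix m k R) (B : Matrix k k R) (u v : m → R) :
    u ⬝ᵥ (Z * B * Zᵀ) *ᵥ v = Zᵀ *ᵥ u ⬝ᵥ B *ᵥ Zᵀ *ᵥ v := by
  rw [← mulVec_mulVec, ← mulVec_mulVec, dotProduct_mulVec, ← mulVec_transpose]

theorem IsSymm.dotProduct_mulVec_comm {B : Matrix k k R} (hB : B.IsSymm) (u v : k → R) :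
    u ⬝ᵥ B *ᵥ v = B *ᵥ u ⬝ᵥ v := by
  rw [dotProduct_mulVec, ← mulVec_transpose, hB.eq]

end Matrix

section WeightedRatios

variable {ι K : Type*} [Fintype ι] [Field K]

theorem sum_mul_mul_mul_div_cancel_left {a b c : ι → K} (s : K) (ha : ∀ i, a i ≠ 0) :
    ∑ i, a i * c i * s * (b i / a i) = s * (c ⬝ᵥ b) := by
  rw [dotProduct, Finset.mul_sum]
  exact Finset.sum_congr rfl fun i _ => by field_simp [ha i]

theorem sum_mul_mul_mul_div_cancel_right {a b c : ι → K} (s : K) (hc : ∀ i, c i ≠ 0) :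
    ∑ i, a i * c i * s * (b i / c i) = s * (a ⬝ᵥ b) := by
  rw [dotProduct, Finset.mul_sum]
  exact Finset.sum_congr rfl fun i _ => by field_simp [hc i]

end WeightedRatios

theorem stmt_11_general {n k : ℕ} (Z : Matrix (Fin n) (Fin k) ℝ) (x y : Fin n → ℝ)
    (hπ : ∀ ℓ, ((Zᵀ * Z)⁻¹.mulVec (Zᵀ.mulVec x)) ℓ ≠ 0)
    (hzx : ∀ ℓ, (fun i => Z i ℓ) ⬝ᵥ x ≠ 0) :
    (x ⬝ᵥ (Z * (Zᵀ * Z)⁻¹ * Zᵀ).mulVec x)⁻¹ * (x ⬝ᵥ (Z * (Zᵀ * Z)⁻¹ * Zᵀ).mulVec y) =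
      (∑ ℓ, (((Zᵀ * Z)⁻¹.mulVec (Zᵀ.mulVec x)) ℓ * ((fun i => Z i ℓ) ⬝ᵥ x) *
          (x ⬝ᵥ (Z * (Zᵀ * Z)⁻¹ * Zᵀ).mulVec x)⁻¹) *
        (((Zᵀ * Z)⁻¹.mulVec (Zᵀ.mulVec y)) ℓ / ((Zᵀ * Z)⁻¹.mulVec (Zᵀ.mulVec x)) ℓ)) ∧
    (x ⬝ᵥ (Z * (Zᵀ * Z)⁻¹ * Zᵀ).mulVec x)⁻¹ * (x ⬝ᵥ (Z * (Zᵀ * Z)⁻¹ * Zᵀ).mulVec y) =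
      (∑ ℓ, (((Zᵀ * Z)⁻¹.mulVec (Zᵀ.mulVec x)) ℓ * ((fun i => Z i ℓ) ⬝ᵥ x) *
          (x ⬝ᵥ (Z * (Zᵀ * Z)⁻¹ * Zᵀ).mulVec x)⁻¹) *
        (((fun i => Z i ℓ) ⬝ᵥ y) / ((fun i => Z i ℓ) ⬝ᵥ x))) := by
  have hsymm : IsSymm (Zᵀ * Z)⁻¹ :=
    IsSymm.inv <| by rw [IsSymm, transpose_mul, transpose_transpose]
  rw [dotProduct_mul_mul_transpose_mulVec Z _ x y]
  constructor
  · exact (sum_mul_mul_mul_div_cancel_left _ hπ).symm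
  · rw [hsymm.dotProduct_mulVec_comm]
    exact (sum_mul_mul_mul_div_cancel_right (c := Zᵀ *ᵥ x) _ hzx).symm

/-- The 2SLS weights for the instruments-as-controls estimators β̂_ℓ = ψ̂_ℓ/π̂_ℓ
coincide with those for the single-instrument estimators β̂*_ℓ = (z_ℓᵀy)/(z_ℓᵀx):
both decompositions of β̂_2sls hold with the same coefficients
w_ℓ = π̂_ℓ (z_ℓᵀx)(xᵀP_Z x)⁻¹. -/
theorem stmt_11 {n k : ℕ} (Z : Matrix (Fin n) (Fin k) ℝ) (x y : Fin n → ℝ)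
    (hZ : IsUnit (Zᵀ * Z).det)
    (hx : x ⬝ᵥ (Z * (Zᵀ * Z)⁻¹ * Zᵀ).mulVec x ≠ 0)
    (hπ : ∀ ℓ, ((Zᵀ * Z)⁻¹.mulVec (Zᵀ.mulVec x)) ℓ ≠ 0)
    (hzx : ∀ ℓ, (fun i => Z i ℓ) ⬝ᵥ x ≠ 0) :
    (x ⬝ᵥ (Z * (Zᵀ * Z)⁻¹ * Zᵀ).mulVec x)⁻¹ * (x ⬝ᵥ (Z * (Zᵀ * Z)⁻¹ * Zᵀ).mulVec y) =
      (∑ ℓ, (((Zᵀ * Z)⁻¹.mulVec (Zᵀ.mulVec x)) ℓ * ((fun i => Z i ℓ) ⬝ᵥ x) *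
          (x ⬝ᵥ (Z * (Zᵀ * Z)⁻¹ * Zᵀ).mulVec x)⁻¹) *
        (((Zᵀ * Z)⁻¹.mulVec (Zᵀ.mulVec y)) ℓ / ((Zᵀ * Z)⁻¹.mulVec (Zᵀ.mulVec x)) ℓ)) ∧
    (x ⬝ᵥ (Z * (Zᵀ * Z)⁻¹ * Zᵀ).mulVec x)⁻¹ * (x ⬝ᵥ (Z * (Zᵀ * Z)⁻¹ * Zᵀ).mulVec y) =
      (∑ ℓ, (((Zᵀ * Z)⁻¹.mulVec (Zᵀ.mulVec x)) ℓ * ((fun i => Z i ℓ) ⬝ᵥ x) *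
          (x ⬝ᵥ (Z * (Zᵀ * Z)⁻¹ * Zᵀ).mulVec x)⁻¹) *
        (((fun i => Z i ℓ) ⬝ᵥ y) / ((fun i => Z i ℓ) ⬝ᵥ x))) :=
  stmt_11_general Z x y hπ hzx
end

section
/- For k_z = 2 with data vectors z₁, z₂, x, y ∈ ℝⁿ: the 2sls weights on the pair (β̂₁, β̂₁*) equal the 2sls weights on the pair (β̂₂, β̂₂*). Concretely, letting z_{1|2} = M_{z₂}z₁, z_{2|1} = M_{z₁}z₂, the coefficient on β̂₁ in the representation β̂_2sls = w̃₁β̂₁ + w̃₂β̂₁* (using instruments [z_{1|2}, z₁]) equals the coefficient on β̂₂ in β̂_2sls = w̃₁β̂₂ + w̃₂β̂₂* (using instruments [z_{2|1}, z₂]). In particular, π̃_{1,1}·(z_{1|2}ᵀx) = −(xᵀz_{2|1})(z_{1|2}ᵀx)/(z₁ᵀz₂(1−φ̂₁₂φ̂₂₁)) = π̃_{2,1}·(z_{2|1}ᵀx). -/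
/-!
Write `a = z₁ᵀz₁`, `b = z₁ᵀz₂`, `c = z₂ᵀz₂`. Since `z_{1|2} ⊥ z₂`, the Gram matrix of the
instruments `[z_{1|2}, z₁]` is `[[s, s], [s, a]]` with `s = z_{1|2}ᵀz₁ = a(1 - φ̂₁₂φ̂₂₁)`, and
Cramer's rule gives `π̃_{1,1} = -(xᵀz_{2|1}) / (b(1 - φ̂₁₂φ̂₂₁))`. This expression is symmetric
under `z₁ ↔ z₂` up to swapping `z_{2|1}` for `z_{1|2}`, so multiplying `π̃_{1,1}` by `z_{1|2}ᵀx`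
and `π̃_{2,1}` by `z_{2|1}ᵀx` gives the same number.
-/

open Matrix

theorem Matrix.inv_fin_two_of_mulVec_apply_zero {K : Type*} [Field K] (a b c d u v : K) :
    ((!![a, b; c, d] : Matrix (Fin 2) (Fin 2) K)⁻¹ *ᵥ ![u, v]) 0
      = (d * u - b * v) / (a * d - b * c) := by
  simp only [inv_def, det_fin_two_of, Ring.inverse_eq_inv', adjugate_fin_two_of, mulVec,
    dotProduct, Fin.sum_univ_two, smul_apply, of_apply, cons_val', cons_val_fin_one, cons_val_zero,
    cons_val_one, smul_eq_mul, div_eq_inv_mul]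
  ring

section PartialOut

variable {ι K : Type*} [Fintype ι] [Field K]

/-- `partialOut v u` is `M_v u`: the component of `u` orthogonal to `v`. -/
def partialOut (v u : ι → K) : ι → K := u - (v ⬝ᵥ u / v ⬝ᵥ v) • v

theorem partialOut_dotProduct_left {v : ι → K} (hv : v ⬝ᵥ v ≠ 0) (u : ι → K) :
    partialOut v u ⬝ᵥ v = 0 := by
  rw [partialOut, sub_dotProduct, smul_dotProduct, smul_eq_mul, div_mul_cancel₀ _ hv,
    dotProduct_comm, sub_self]

theorem partialOut_dotProduct_self {v : ι → K} (hv : v ⬝ᵥ v ≠ 0) (u : ι → K) :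
    partialOut v u ⬝ᵥ partialOut v u = partialOut v u ⬝ᵥ u := by
  conv_lhs => arg 2; rw [partialOut]
  rw [dotProduct_sub, dotProduct_smul, partialOut_dotProduct_left hv, smul_zero, sub_zero]

theorem inv_gram_partialOut_mulVec_apply_zero {z₁ z₂ : ι → K} (x : ι → K)
    (h₁ : z₁ ⬝ᵥ z₁ ≠ 0) (h₂ : z₂ ⬝ᵥ z₂ ≠ 0) (h₁₂ : z₁ ⬝ᵥ z₂ ≠ 0)
    (hφ : 1 - z₁ ⬝ᵥ z₂ / z₁ ⬝ᵥ z₁ * (z₂ ⬝ᵥ z₁ / z₂ ⬝ᵥ z₂) ≠ 0) :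
    ((!![partialOut z₂ z₁ ⬝ᵥ partialOut z₂ z₁, partialOut z₂ z₁ ⬝ᵥ z₁;
          z₁ ⬝ᵥ partialOut z₂ z₁, z₁ ⬝ᵥ z₁] : Matrix (Fin 2) (Fin 2) K)⁻¹ *ᵥ
        ![partialOut z₂ z₁ ⬝ᵥ x, z₁ ⬝ᵥ x]) 0 =
      -(x ⬝ᵥ partialOut z₁ z₂) /
        (z₁ ⬝ᵥ z₂ * (1 - z₁ ⬝ᵥ z₂ / z₁ ⬝ᵥ z₁ * (z₂ ⬝ᵥ z₁ / z₂ ⬝ᵥ z₂))) := by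
  rw [partialOut_dotProduct_self h₂, dotProduct_comm z₁ (partialOut z₂ z₁),
    Matrix.inv_fin_two_of_mulVec_apply_zero]
  simp only [partialOut, sub_dotProduct, dotProduct_sub, smul_dotProduct, dotProduct_smul,
    smul_eq_mul, dotProduct_comm z₂ z₁, dotProduct_comm x z₁, dotProduct_comm x z₂] at hφ ⊢
  generalize z₁ ⬝ᵥ z₁ = a, z₁ ⬝ᵥ z₂ = b, z₂ ⬝ᵥ z₂ = c, z₁ ⬝ᵥ x = p, z₂ ⬝ᵥ x = q at *
  have hs : a - b / c * b ≠ 0 := by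
    contrapose! hφ
    field_simp at hφ ⊢
    linear_combination hφ
  have hdet : (a - b / c * b) * a - (a - b / c * b) * (a - b / c * b) ≠ 0 := by
    rw [← mul_sub, sub_sub_cancel]
    exact mul_ne_zero hs (mul_ne_zero (div_ne_zero h₁₂ h₂) h₁₂)
  rw [div_eq_div_iff hdet (mul_ne_zero h₁₂ hφ)]
  field_simp
  ring

end PartialOut

theorem dotProduct_self_ne_zero_of_dotProduct_ne_zero {ι R : Type*} [Fintype ι] [Ring R]
    [LinearOrder R] [IsStrictOrderedRing R] {v w : ι → R}
    (h : v ⬝ᵥ w ≠ 0) : v ⬝ᵥ v ≠ 0 := fun hv =>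
  h (by rw [dotProduct_self_eq_zero.mp hv, zero_dotProduct])

theorem stmt_18_general {n : ℕ} (z₁ z₂ x : Fin n → ℝ)
    (hz12 : z₁ ⬝ᵥ z₂ ≠ 0)
    (φ12 φ21 : ℝ)
    (hφ12 : φ12 = (z₁ ⬝ᵥ z₂) / (z₁ ⬝ᵥ z₁))
    (hφ21 : φ21 = (z₂ ⬝ᵥ z₁) / (z₂ ⬝ᵥ z₂))
    (hφ : 1 - φ12 * φ21 ≠ 0)
    (z12 z21 : Fin n → ℝ)
    (hz12def : z12 = z₁ - φ21 • z₂)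
    (hz21def : z21 = z₂ - φ12 • z₁) :
    ((!![z12 ⬝ᵥ z12, z12 ⬝ᵥ z₁; z₁ ⬝ᵥ z12, z₁ ⬝ᵥ z₁] : Matrix (Fin 2) (Fin 2) ℝ)⁻¹.mulVec
          ![z12 ⬝ᵥ x, z₁ ⬝ᵥ x]) 0 * (z12 ⬝ᵥ x) =
        -((x ⬝ᵥ z21) * (z12 ⬝ᵥ x)) / ((z₁ ⬝ᵥ z₂) * (1 - φ12 * φ21)) ∧
      ((!![z12 ⬝ᵥ z12, z12 ⬝ᵥ z₁; z₁ ⬝ᵥ z12, z₁ ⬝ᵥ z₁] : Matrix (Fin 2) (Fin 2) ℝ)⁻¹.mulVec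
          ![z12 ⬝ᵥ x, z₁ ⬝ᵥ x]) 0 * (z12 ⬝ᵥ x) =
        ((!![z21 ⬝ᵥ z21, z21 ⬝ᵥ z₂; z₂ ⬝ᵥ z21, z₂ ⬝ᵥ z₂] : Matrix (Fin 2) (Fin 2) ℝ)⁻¹.mulVec
          ![z21 ⬝ᵥ x, z₂ ⬝ᵥ x]) 0 * (z21 ⬝ᵥ x) := by
  have h₁ := dotProduct_self_ne_zero_of_dotProduct_ne_zero hz12
  have h₂ := dotProduct_self_ne_zero_of_dotProduct_ne_zero (dotProduct_comm z₁ z₂ ▸ hz12)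
  obtain rfl : z12 = partialOut z₂ z₁ := by rw [hz12def, hφ21, partialOut]
  obtain rfl : z21 = partialOut z₁ z₂ := by rw [hz21def, hφ12, partialOut]
  subst hφ12 hφ21
  have hπ₁ := inv_gram_partialOut_mulVec_apply_zero x h₁ h₂ hz12 hφ
  have hπ₂ := inv_gram_partialOut_mulVec_apply_zero x h₂ h₁ (dotProduct_comm z₁ z₂ ▸ hz12)
    (by rwa [mul_comm])
  rw [hπ₁, hπ₂, dotProduct_comm z₂ z₁, dotProduct_comm x, dotProduct_comm x]
  constructor <;> ring

/-- For k_z = 2: the 2SLS weight on β̂₁ (instruments [z_{1|2}, z₁]) equals the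
weight on β̂₂ (instruments [z_{2|1}, z₂]); concretely,
π̃_{1,1}(z_{1|2}ᵀx) = −(xᵀz_{2|1})(z_{1|2}ᵀx)/(z₁ᵀz₂(1−φ̂₁₂φ̂₂₁)) = π̃_{2,1}(z_{2|1}ᵀx). -/
theorem stmt_18 {n : ℕ} (z₁ z₂ x : Fin n → ℝ)
    (hind : LinearIndependent ℝ ![z₁, z₂])
    (hz12 : z₁ ⬝ᵥ z₂ ≠ 0)
    (φ12 φ21 : ℝ)
    (hφ12 : φ12 = (z₁ ⬝ᵥ z₂) / (z₁ ⬝ᵥ z₁))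
    (hφ21 : φ21 = (z₂ ⬝ᵥ z₁) / (z₂ ⬝ᵥ z₂))
    (hφ : 1 - φ12 * φ21 ≠ 0)
    (z12 z21 : Fin n → ℝ)
    (hz12def : z12 = z₁ - φ21 • z₂)
    (hz21def : z21 = z₂ - φ12 • z₁) :
    ((!![z12 ⬝ᵥ z12, z12 ⬝ᵥ z₁; z₁ ⬝ᵥ z12, z₁ ⬝ᵥ z₁] : Matrix (Fin 2) (Fin 2) ℝ)⁻¹.mulVec
          ![z12 ⬝ᵥ x, z₁ ⬝ᵥ x]) 0 * (z12 ⬝ᵥ x) =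
        -((x ⬝ᵥ z21) * (z12 ⬝ᵥ x)) / ((z₁ ⬝ᵥ z₂) * (1 - φ12 * φ21)) ∧
      ((!![z12 ⬝ᵥ z12, z12 ⬝ᵥ z₁; z₁ ⬝ᵥ z12, z₁ ⬝ᵥ z₁] : Matrix (Fin 2) (Fin 2) ℝ)⁻¹.mulVec
          ![z12 ⬝ᵥ x, z₁ ⬝ᵥ x]) 0 * (z12 ⬝ᵥ x) =
        ((!![z21 ⬝ᵥ z21, z21 ⬝ᵥ z₂; z₂ ⬝ᵥ z21, z₂ ⬝ᵥ z₂] : Matrix (Fin 2) (Fin 2) ℝ)⁻¹.mulVec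
          ![z21 ⬝ᵥ x, z₂ ⬝ᵥ x]) 0 * (z21 ⬝ᵥ x) :=
  stmt_18_general z₁ z₂ x hz12 φ12 φ21 hφ12 hφ21 hφ z12 z21 hz12def hz21def
end
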